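/- With notation as in the previous statement, the map Ψ(R(U)) = SF(R(U)·(y_1+...+y_{|λ|} − d·y_{|λ|+1})) equals ∑_{U'} R(U'), where U' runs over partitionings obtained from U by adding the new element |λ|+1 to one of the odd-cardinality blocks of U. -/

import Mathlib

/-! `SF` is additive and kills every monomial containing a square. In a block
`B = {b₀ < b₁ < ⋯ < b_{r-1}}` of `U`, the factor `y_{b_{2k}} - y_{b_{2k+1}}` of `R(U)` turns
`y_{b_{2k}} + y_{b_{2k+1}}` into a difference of squares, so `SF (R(U) · ∑_{i ∈ B} y_i)`
vanishes for an even block and equals `SF (R(U) · y_{b_{r-1}})` for an odd one. Exactly `d`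
blocks are odd, so `-d · y_n` splits into one `-y_n` per odd block, and
`R(U) · (y_{b_{r-1}} - y_n)` is `R(U')` for `U'` obtained by adjoining `n` to that block. Since
the blocks of `U'` are disjoint, `R(U')` has degree at most one in every variable, so `SF` fixes
it. -/

open MvPolynomial Finset

noncomputable section

/-- The "square-free map" dropping all non-square-free monomials of a polynomial. -/
def SF (p : MvPolynomial ℕ ℂ) : MvPolynomial ℕ ℂ :=
  ∑ d ∈ p.support.filter (fun d => ∀ i ∈ d.support, d i ≤ 1),
    monomial d (coeff d p)

/-- `R` of a block `{u_1 < u_2 < … < u_r}`: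
`(y_{u_1} - y_{u_2})(y_{u_3} - y_{u_4}) ⋯ (y_{u_{2⌊r/2⌋-1}} - y_{u_{2⌊r/2⌋}})`. -/
def Rblock (B : Finset ℕ) : MvPolynomial ℕ ℂ :=
  ∏ i ∈ Finset.range (B.card / 2),
    (X ((B.sort (· ≤ ·)).getD (2 * i) 0) - X ((B.sort (· ≤ ·)).getD (2 * i + 1) 0))

/-- `R(U)`: the product of the `R`-polynomials of the blocks of `U`. -/
def RU {l : ℕ} (U : Fin l → Finset ℕ) : MvPolynomial ℕ ℂ :=
  ∏ j, Rblock (U j)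

open Function

lemma coeff_SF (p : MvPolynomial ℕ ℂ) (e : ℕ →₀ ℕ) :
    coeff e (SF p) = if ∀ i ∈ e.support, e i ≤ 1 then coeff e p else 0 := by
  classical
  simp only [SF, coeff_sum, coeff_monomial, sum_ite_eq', mem_filter, mem_support_iff]
  split_ifs <;> grind

lemma SF_add (p q : MvPolynomial ℕ ℂ) : SF (p + q) = SF p + SF q := by
  ext e
  simp only [coeff_SF, coeff_add]
  split_ifs <;> simp

lemma SF_C_mul (c : ℂ) (p : MvPolynomial ℕ ℂ) : SF (C c * p) = C c * SF p := by
  ext e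
  simp only [coeff_SF, coeff_C_mul]
  split_ifs <;> simp

lemma SF_sub (p q : MvPolynomial ℕ ℂ) : SF (p - q) = SF p - SF q :=
  map_sub (AddMonoidHom.mk' SF SF_add) p q

lemma SF_sum {ι : Type*} (s : Finset ι) (f : ι → MvPolynomial ℕ ℂ) :
    SF (∑ k ∈ s, f k) = ∑ k ∈ s, SF (f k) :=
  map_sum (AddMonoidHom.mk' SF SF_add) f s

lemma SF_X_sq_mul (a : ℕ) (q : MvPolynomial ℕ ℂ) : SF (X a ^ 2 * q) = 0 := by
  ext e
  rw [coeff_SF, coeff_zero, X_pow_eq_monomial, coeff_monomial_mul']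
  split_ifs with he h2
  · have := Finsupp.single_le_iff.1 h2
    have := he a (Finsupp.mem_support_iff.2 (by omega))
    omega
  all_goals rfl

lemma SF_eq_self {p : MvPolynomial ℕ ℂ} (hp : ∀ i, p.degreeOf i ≤ 1) : SF p = p := by
  ext e
  rw [coeff_SF, ite_eq_left_iff, eq_comm, ← notMem_support_iff]
  push Not
  exact fun ⟨i, _, hi⟩ => notMem_support_of_degreeOf_lt i ((hp i).trans_lt hi)

section DegreeOfLeOne

variable {σ R : Type*} [CommSemiring R]

lemma degreeOf_mul_le_one {p q : MvPolynomial σ R} (hp : ∀ i, p.degreeOf i ≤ 1)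
    (hq : ∀ i, q.degreeOf i ≤ 1) (hpq : Disjoint p.vars q.vars) (i : σ) :
    (p * q).degreeOf i ≤ 1 := by
  have hvars : i ∈ p.vars → i ∉ q.vars := fun hi => disjoint_left.1 hpq hi
  rw [mem_vars_iff_degreeOf_ne_zero, mem_vars_iff_degreeOf_ne_zero] at hvars
  have := hp i
  have := hq i
  have := degreeOf_mul_le i p q
  omega

lemma degreeOf_prod_le_one {ι : Type*} {s : Finset ι} {f : ι → MvPolynomial σ R}
    (hf : ∀ k ∈ s, ∀ i, (f k).degreeOf i ≤ 1)
    (hs : (s : Set ι).PairwiseDisjoint fun k => (f k).vars) (i : σ) :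
    (∏ k ∈ s, f k).degreeOf i ≤ 1 := by
  classical
  induction s using Finset.induction_on generalizing i with
  | empty => simp
  | insert a s ha ih =>
    rw [prod_insert ha]
    refine degreeOf_mul_le_one (hf a (mem_insert_self a s))
      (ih (fun k hk => hf k (mem_insert_of_mem hk)) (hs.subset (by simp))) ?_ i
    refine disjoint_of_subset_right (vars_prod f)
      ((disjoint_biUnion_right _ _ _).2 fun k hk => ?_)
    exact hs (by simp) (by simp [hk]) (ne_of_mem_of_not_mem hk ha).symm

end DegreeOfLeOne

section XSubX

variable {σ R : Type*} [CommRing R] [Nontrivial R]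

lemma degreeOf_X_sub_X_le_one (a b i : σ) : (X a - X b : MvPolynomial σ R).degreeOf i ≤ 1 := by
  classical
  refine (degreeOf_sub_le i _ _).trans (max_le ?_ ?_) <;> rw [degreeOf_X] <;> split_ifs <;> omega

lemma vars_X_sub_X_subset [DecidableEq σ] (a b : σ) :
    (X a - X b : MvPolynomial σ R).vars ⊆ {a, b} :=
  (vars_sub_subset _).trans (by rw [vars_X, vars_X]; rfl)

end XSubX

lemma pairwise_disjoint_update_insert {ι α : Type*} [DecidableEq ι] [DecidableEq α]
    {U : ι → Finset α} (hU : Pairwise (Disjoint on U)) {n : α} (hn : ∀ k, n ∉ U k)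
    (j : ι) :
    Pairwise (Disjoint on update U j (insert n (U j))) := by
  intro i k hik
  rcases eq_or_ne i j with rfl | hi
  · rw [onFun, update_self, update_of_ne hik.symm, disjoint_insert_left]
    exact ⟨hn k, hU hik⟩
  rcases eq_or_ne k j with rfl | hk
  · rw [onFun, update_self, update_of_ne hi, disjoint_insert_right]
    exact ⟨hn i, hU hik⟩
  · rw [onFun, update_of_ne hi, update_of_ne hk]
    exact hU hik

/-- Indexed from `0`, with junk value `0` for `k ≥ B.card`. -/
def sortedNth (B : Finset ℕ) (k : ℕ) : ℕ :=
  (B.sort (· ≤ ·)).getD k 0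

lemma Rblock_eq_prod (B : Finset ℕ) :
    Rblock B =
      ∏ k ∈ range (B.card / 2), (X (sortedNth B (2 * k)) - X (sortedNth B (2 * k + 1))) :=
  rfl

lemma sortedNth_mem {B : Finset ℕ} {k : ℕ} (hk : k < B.card) : sortedNth B k ∈ B := by
  have hl : k < (B.sort (· ≤ ·)).length := by rwa [length_sort]
  rw [sortedNth, List.getD_eq_getElem _ _ hl]
  exact (mem_sort _).1 (List.getElem_mem hl)

lemma sortedNth_injOn (B : Finset ℕ) : Set.InjOn (sortedNth B) (range B.card) := by
  intro k hk k' hk' h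
  have hl : k < (B.sort (· ≤ ·)).length := by simpa using hk
  have hl' : k' < (B.sort (· ≤ ·)).length := by simpa using hk'
  rw [sortedNth, sortedNth, List.getD_eq_getElem _ _ hl, List.getD_eq_getElem _ _ hl'] at h
  exact (List.Nodup.getElem_inj_iff (sort_nodup _ _)).1 h

lemma image_sortedNth (B : Finset ℕ) : (range B.card).image (sortedNth B) = B :=
  eq_of_subset_of_card_le (image_subset_iff.2 fun _ hk => sortedNth_mem (mem_range.1 hk))
    (by rw [card_image_of_injOn (sortedNth_injOn B), card_range])

lemma sum_range_card_sortedNth {M : Type*} [AddCommMonoid M] (B : Finset ℕ) (f : ℕ → M) :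
    ∑ k ∈ range B.card, f (sortedNth B k) = ∑ i ∈ B, f i := by
  conv_rhs => rw [← image_sortedNth B]
  exact (sum_image (sortedNth_injOn B)).symm

lemma sort_insert_of_forall_lt {B : Finset ℕ} {n : ℕ} (hn : ∀ b ∈ B, b < n) :
    (insert n B).sort (· ≤ ·) = B.sort (· ≤ ·) ++ [n] := by
  have hnB : n ∉ B := fun h => lt_irrefl n (hn n h)
  refine List.Perm.eq_of_pairwise' (r := (· ≤ ·)) (pairwise_sort _ _) ?_ ?_
  · rw [List.pairwise_append]
    exact ⟨pairwise_sort _ _, List.pairwise_singleton _ _,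
      fun a ha b hb => (List.mem_singleton.1 hb) ▸ (hn a ((mem_sort _).1 ha)).le⟩
  · refine (sort_perm_toList _ _).trans ((toList_insert hnB).trans ?_)
    exact (List.Perm.cons n (sort_perm_toList B _).symm).trans
      (List.perm_append_singleton _ _).symm

lemma sortedNth_insert_of_lt {B : Finset ℕ} {n k : ℕ} (hn : ∀ b ∈ B, b < n)
    (hk : k < B.card) :
    sortedNth (insert n B) k = sortedNth B k := by
  rw [sortedNth, sortedNth, sort_insert_of_forall_lt hn, List.getD_append _ _ _ _ (by simpa)]

lemma sortedNth_insert_card {B : Finset ℕ} {n : ℕ} (hn : ∀ b ∈ B, b < n) :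
    sortedNth (insert n B) B.card = n := by
  rw [sortedNth, sort_insert_of_forall_lt hn, List.getD_append_right _ _ _ _ (by simp)]
  simp

lemma Rblock_insert_of_odd {B : Finset ℕ} {n : ℕ} (hn : ∀ b ∈ B, b < n)
    (hodd : Odd B.card) :
    Rblock (insert n B) = Rblock B * (X (sortedNth B (B.card - 1)) - X n) := by
  obtain ⟨m, hm⟩ := hodd
  have hcard : (insert n B).card = 2 * m + 2 := by
    rw [card_insert_of_notMem fun h => lt_irrefl n (hn n h), hm]
  rw [Rblock_eq_prod, Rblock_eq_prod, hcard, hm, Nat.add_sub_cancel,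
    show (2 * m + 2) / 2 = m + 1 by omega, show (2 * m + 1) / 2 = m by omega, prod_range_succ]
  congr 1
  · refine prod_congr rfl fun k hk => ?_
    rw [mem_range] at hk
    rw [sortedNth_insert_of_lt hn (by omega), sortedNth_insert_of_lt hn (by omega)]
  · rw [sortedNth_insert_of_lt hn (by omega), ← hm, sortedNth_insert_card hn]

lemma sum_range_two_mul {M : Type*} [AddCommMonoid M] (m : ℕ) (g : ℕ → M) :
    ∑ k ∈ range (2 * m), g k = ∑ k ∈ range m, (g (2 * k) + g (2 * k + 1)) := by
  induction m with
  | zero => simp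
  | succ m ih => rw [Nat.mul_succ, sum_range_succ, sum_range_succ, sum_range_succ, ih, add_assoc]

lemma SF_Rblock_mul_X_add_X {B : Finset ℕ} {k : ℕ} (hk : k < B.card / 2)
    (Q : MvPolynomial ℕ ℂ) :
    SF (Rblock B * Q * (X (sortedNth B (2 * k)) + X (sortedNth B (2 * k + 1)))) = 0 := by
  rw [Rblock_eq_prod, ← mul_prod_erase _ _ (mem_range.2 hk)]
  set P := ∏ k' ∈ (range (B.card / 2)).erase k,
    (X (sortedNth B (2 * k')) - X (sortedNth B (2 * k' + 1)) : MvPolynomial ℕ ℂ)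
  rw [show ∀ a b : MvPolynomial ℕ ℂ,
      (a - b) * P * Q * (a + b) = a ^ 2 * (P * Q) - b ^ 2 * (P * Q) from fun a b => by ring,
    SF_sub, SF_X_sq_mul, SF_X_sq_mul, sub_zero]

lemma sum_SF_Rblock_mul_X (B : Finset ℕ) (Q : MvPolynomial ℕ ℂ) :
    ∑ i ∈ B, SF (Rblock B * Q * X i) =
      if Odd B.card then SF (Rblock B * Q * X (sortedNth B (B.card - 1))) else 0 := by
  rw [← sum_range_card_sortedNth]
  have hpairs : ∀ m, m ≤ B.card / 2 →
      ∑ k ∈ range (2 * m), SF (Rblock B * Q * X (sortedNth B k)) = 0 := fun m hm => by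
    rw [sum_range_two_mul]
    refine sum_eq_zero fun k hk => ?_
    rw [← SF_add, ← mul_add]
    exact SF_Rblock_mul_X_add_X (by rw [mem_range] at hk; omega) Q
  obtain ⟨m, hm | hm⟩ := Nat.even_or_odd' B.card
  · rw [if_neg (by rw [Nat.not_odd_iff_even]; exact ⟨m, by omega⟩), hm, hpairs m (by omega)]
  · rw [if_pos ⟨m, hm⟩, hm, sum_range_succ, hpairs m (by omega), zero_add, Nat.add_sub_cancel]

lemma vars_Rblock_subset (B : Finset ℕ) : (Rblock B).vars ⊆ B := by
  refine (vars_prod _).trans (biUnion_subset.2 fun k hk => (vars_X_sub_X_subset _ _).trans ?_)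
  rw [mem_range] at hk
  exact insert_subset (sortedNth_mem (by omega))
    (singleton_subset_iff.2 (sortedNth_mem (by omega)))

lemma degreeOf_Rblock_le_one (B : Finset ℕ) (i : ℕ) : (Rblock B).degreeOf i ≤ 1 := by
  refine degreeOf_prod_le_one (fun k _ => degreeOf_X_sub_X_le_one _ _)
    (fun k hk k' hk' hkk' => ?_) i
  simp only [coe_range, Set.mem_Iio] at hk hk'
  have hinj := sortedNth_injOn B
  refine (disjoint_of_subset_left (vars_X_sub_X_subset _ _)
    (disjoint_of_subset_right (vars_X_sub_X_subset _ _) ?_))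
  simp only [disjoint_insert_left, disjoint_insert_right, disjoint_singleton, mem_insert,
    mem_singleton, not_or]
  refine ⟨⟨?_, ?_⟩, ?_, ?_⟩ <;> intro h <;>
    have := hinj (by simp; omega) (by simp; omega) h <;> omega

lemma degreeOf_RU_le_one {l : ℕ} {U : Fin l → Finset ℕ} (hU : Pairwise (Disjoint on U))
    (i : ℕ) :
    (RU U).degreeOf i ≤ 1 :=
  degreeOf_prod_le_one (fun j _ => degreeOf_Rblock_le_one (U j))
    (fun _ _ _ _ hjk => (hU hjk).mono (vars_Rblock_subset _) (vars_Rblock_subset _)) i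

lemma RU_eq_Rblock_mul {l : ℕ} (U : Fin l → Finset ℕ) (j : Fin l) :
    RU U = Rblock (U j) * ∏ k ∈ univ.erase j, Rblock (U k) :=
  (mul_prod_erase _ _ (mem_univ j)).symm

lemma RU_update_insert_of_odd {l : ℕ} {U : Fin l → Finset ℕ} {j : Fin l} {n : ℕ}
    (hn : ∀ b ∈ U j, b < n) (hodd : Odd (U j).card) :
    RU (update U j (insert n (U j))) =
      RU U * (X (sortedNth (U j) ((U j).card - 1)) - X n) := by
  rw [RU_eq_Rblock_mul _ j, update_self, Rblock_insert_of_odd hn hodd,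
    RU_eq_Rblock_mul U j, prod_congr rfl fun k hk => by
      rw [update_of_ne (ne_of_mem_erase hk)]]
  ring

theorem Psi_RU_eq_sum_general
    (lam1 lam2 l : ℕ)
    (U : Fin l → Finset ℕ)
    (hdisj : ∀ i j, i ≠ j → Disjoint (U i) (U j))
    (hcover : Finset.univ.biUnion U = Finset.range (lam1 + lam2))
    (hodd : (Finset.univ.filter fun j => Odd (U j).card).card = lam1 - lam2) :
    SF (RU U * ((∑ i ∈ Finset.range (lam1 + lam2), X i) -
        C ((lam1 - lam2 : ℕ) : ℂ) * X (lam1 + lam2))) =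
      ∑ j ∈ Finset.univ.filter (fun j => Odd (U j).card),
        RU (Function.update U j (insert (lam1 + lam2) (U j))) := by
  have hlt : ∀ j, ∀ b ∈ U j, b < lam1 + lam2 := fun j b hb =>
    mem_range.1 (hcover ▸ mem_biUnion.2 ⟨j, mem_univ j, hb⟩)
  have hblock : ∀ j, ∑ i ∈ U j, SF (RU U * X i) = if Odd (U j).card
      then SF (RU U * X (sortedNth (U j) ((U j).card - 1))) else 0 := fun j => by
    rw [RU_eq_Rblock_mul U j]
    exact sum_SF_Rblock_mul_X _ _
  calc _ = ∑ i ∈ range (lam1 + lam2), SF (RU U * X i) -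
        C ((lam1 - lam2 : ℕ) : ℂ) * SF (RU U * X (lam1 + lam2)) := by
        rw [mul_sub, mul_sum, mul_left_comm, SF_sub, SF_sum, SF_C_mul]
    _ = ∑ j ∈ univ.filter (fun j => Odd (U j).card),
          SF (RU U * (X (sortedNth (U j) ((U j).card - 1)) - X (lam1 + lam2))) := by
        rw [← hcover, sum_biUnion fun i _ j _ hij => hdisj i j hij,
          sum_congr rfl fun j _ => hblock j, sum_ite, sum_const_zero, add_zero, map_natCast C,
          ← hodd, ← nsmul_eq_mul, ← sum_const, ← sum_sub_distrib]
        simp only [mul_sub, SF_sub]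
    _ = _ := sum_congr rfl fun j hj => by
        rw [← RU_update_insert_of_odd (hlt j) (mem_filter.1 hj).2]
        exact SF_eq_self (degreeOf_RU_le_one (pairwise_disjoint_update_insert hdisj
          (fun k hk => lt_irrefl _ (hlt k _ hk)) j))

/-- The map `Ψ` of the paper on generators: with `d = λ₁ - λ₂ > 0`, `|λ| = λ₁ + λ₂`,
and `U` a partitioning of `{1,…,|λ|}` into `ℓ` blocks exactly `d` of which have odd
cardinality, `Ψ(R(U)) = SF(R(U)·(y_1 + … + y_{|λ|} - d·y_{|λ|+1})) = ∑_{U'} R(U')`,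
where `U'` runs over the partitionings obtained from `U` by adding the new element
`|λ|+1` to one of the odd-cardinality blocks of `U`.
(Indices are 0-based: the set partitioned is `{0,…,n-1}`, `n = λ₁ + λ₂`, and the
new element is `n`.) -/
theorem Psi_RU_eq_sum
    (lam1 lam2 l : ℕ) (hd : lam2 < lam1) (hlam2 : 0 < lam2)
    (U : Fin l → Finset ℕ)
    (hdisj : ∀ i j, i ≠ j → Disjoint (U i) (U j))
    (hcover : Finset.univ.biUnion U = Finset.range (lam1 + lam2))
    (hodd : (Finset.univ.filter fun j => Odd (U j).card).card = lam1 - lam2) :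
    SF (RU U * ((∑ i ∈ Finset.range (lam1 + lam2), X i) -
        C ((lam1 - lam2 : ℕ) : ℂ) * X (lam1 + lam2))) =
      ∑ j ∈ Finset.univ.filter (fun j => Odd (U j).card),
        RU (Function.update U j (insert (lam1 + lam2) (U j))) :=
  Psi_RU_eq_sum_general lam1 lam2 l U hdisj hcover hodd

end
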